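/- arXiv:math/0309068 — 2 statements merged into one kernel-verified Lean document; each statement's English description precedes it below -/
import Mathlib

section
/- Let F be a field and let r < ℓ be natural numbers. For any F-algebra homomorphism φ : F[x₁, …, x_ℓ] → F[y₁, …, y_r] between the polynomial rings in ℓ and r variables, the ring F[y₁, …, y_r], regarded as a module over F[x₁, …, x_ℓ] via φ, is a torsion module. -/
/-! Injective algebra maps cannot lower transcendence degree, which is `ℓ` for the source and `r`
for the target; so `φ` has a nonzero kernel element, and it annihilates the whole target. -/

universe u v w

open Cardinal

theorem MvPolynomial.not_injective_of_lift_cardinalMk_lt {R : Type u} {σ : Type v} {τ : Type w}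
    [CommRing R] [IsDomain R] (h : lift.{v} #τ < lift.{w} #σ)
    (φ : MvPolynomial σ R →ₐ[R] MvPolynomial τ R) : ¬Function.Injective φ := fun hφ => by
  have hle := lift_trdeg_le_of_injective φ hφ
  simp only [MvPolynomial.trdeg_of_isDomain, lift_lift] at hle
  have hlt := (lift_lt.{max v w, u}).2 h
  simp only [lift_lift] at hlt
  exact hle.not_gt hlt

/-- For `r < ℓ` and any `F`-algebra homomorphism `φ` from the polynomial ring
in `ℓ` variables to the polynomial ring in `r` variables, the target is a
torsion module over the source (via `φ`, so `p • q = φ p * q`). -/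
theorem mvPolynomial_target_torsion_of_lt
    (F : Type*) [Field F] (r ℓ : ℕ) (h : r < ℓ)
    (φ : MvPolynomial (Fin ℓ) F →ₐ[F] MvPolynomial (Fin r) F) :
    ∀ q : MvPolynomial (Fin r) F,
      ∃ p : MvPolynomial (Fin ℓ) F, p ≠ 0 ∧ φ p * q = 0 := by
  obtain ⟨p, hφp, hp⟩ : ∃ p, φ p = 0 ∧ p ≠ 0 := by
    have hφ := MvPolynomial.not_injective_of_lift_cardinalMk_lt (by simpa using h) φ
    simpa [injective_iff_map_eq_zero] using hφ
  exact fun q => ⟨p, hp, by rw [hφp, zero_mul]⟩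
end

section
/- Let P, P', Q, Q' be commutative rings (playing the roles of the localized equivariant cohomology rings of M, M^T, N, N^T for a T-equivariant map f : M → N). Suppose given: ring homomorphisms i_M* : P → P' (injective), i_N* : Q → Q' (bijective), and f^{T*} : Q' → P'; additive maps f_{T*} : P → Q, f^T_* : P' → Q', i_{M∗} : P' → P, i_{N∗} : Q' → Q; and units e_M ∈ P', e_N ∈ Q'; satisfying (i) i_M*(i_{M∗}(b)) = e_M · b for all b ∈ P', (ii) i_N*(i_{N∗}(c)) = e_N · c for all c ∈ Q', (iii) f_{T*}(i_{M∗}(b)) = i_{N∗}(f^T_*(b)) for all b ∈ P', and (iv) the projection formula f^T_*(f^{T*}(c) · b) = c · f^T_*(b) for all c ∈ Q', b ∈ P'. Then for every a ∈ P, i_N*(f_{T*}(a)) = f^T_*( f^{T*}(e_N) · e_M⁻¹ · i_M*(a) ); equivalently, f_{T*}(a) = (i_N*)⁻¹ f^T_*( f^{T*}(e_N) · e_M⁻¹ · i_M*(a) ). (This is the formal content of the relative localization formula for a torus action, with e_M and e_N the invertible equivariant Euler classes of the normal bundles of the fixed-point sets.) -/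
/-- Relative localization formula for a torus action (formal content).
`P, P', Q, Q'` play the roles of the localized equivariant cohomology rings of
`M, M^T, N, N^T` for a `T`-equivariant map `f : M → N`. -/
theorem relative_localization_formula
    {P P' Q Q' : Type*} [CommRing P] [CommRing P'] [CommRing Q] [CommRing Q']
    (iM : P →+* P') (hiM : Function.Injective iM)
    (iN : Q →+* Q') (hiN : Function.Bijective iN)
    (fTpull : Q' →+* P')
    (fTstar : P →+ Q) (fTfix : P' →+ Q')
    (iMlow : P' →+ P) (iNlow : Q' →+ Q)
    (eM : P'ˣ) (eN : Q'ˣ)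
    (h1 : ∀ b : P', iM (iMlow b) = (eM : P') * b)
    (h2 : ∀ c : Q', iN (iNlow c) = (eN : Q') * c)
    (h3 : ∀ b : P', fTstar (iMlow b) = iNlow (fTfix b))
    (h4 : ∀ (c : Q') (b : P'), fTfix (fTpull c * b) = c * fTfix b)
    (a : P) :
    iN (fTstar a) = fTfix (fTpull (eN : Q') * (↑eM⁻¹ : P') * iM a) := by
  have ha : a = iMlow ((↑eM⁻¹ : P') * iM a) := by
    apply hiM
    rw [h1]
    rw [← mul_assoc, Units.mul_inv, one_mul]
  calc iN (fTstar a) = iN (iNlow (fTfix ((↑eM⁻¹ : P') * iM a))) := by conv_lhs => rw [ha, h3]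
    _ = (eN : Q') * fTfix ((↑eM⁻¹ : P') * iM a) := h2 _
    _ = fTfix (fTpull (eN : Q') * ((↑eM⁻¹ : P') * iM a)) := (h4 _ _).symm
    _ = fTfix (fTpull (eN : Q') * (↑eM⁻¹ : P') * iM a) := by rw [mul_assoc]
end
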